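/- Let V̄ be a surjective m-ordered PSO on S with V̄(e_i) = e_i for all i, and define V by (V(x))_1 = (V̄(x))_1 + (V̄(x))_2 and (V(x))_k = (V̄(x))_{k+1} for k > 1. Then V is an m-ordered PSO that is surjective on S but not orthogonal preserving (indeed V(e_1) = V(e_2) = e_1). -/

import Mathlib

/-- The m-ordered polynomial operator associated to a hypermatrix `P`. -/
noncomputable def psoV (m : ℕ) (P : (Fin m → ℕ) → ℕ → ℝ) (x : ℕ → ℝ) (k : ℕ) : ℝ :=
  ∑' i : Fin m → ℕ, P i k * ∏ j, x (i j)

/-- The hypermatrix is stochastic. -/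
def IsStochastic (m : ℕ) (P : (Fin m → ℕ) → ℕ → ℝ) : Prop :=
  (∀ i k, 0 ≤ P i k) ∧ ∀ i, HasSum (fun k => P i k) 1

/-- symmetry of the hypermatrix in its first m indices. -/
def HypSymm (m : ℕ) (P : (Fin m → ℕ) → ℕ → ℝ) : Prop :=
  ∀ (σ : Equiv.Perm (Fin m)) (i : Fin m → ℕ) (k : ℕ), P (i ∘ σ) k = P i k

/-- membership in the infinite-dimensional simplex S. -/
def inS (x : ℕ → ℝ) : Prop := (∀ i, 0 ≤ x i) ∧ HasSum x 1

/-- the standard basis vector e_i. -/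
def stdBasis (i : ℕ) : ℕ → ℝ := fun n => if n = i then 1 else 0

/-- x and y are orthogonal: disjoint supports. -/
def Orth (x y : ℕ → ℝ) : Prop := ∀ k, x k * y k = 0

/-- V is orthogonal preserving on S. -/
def IsOP (m : ℕ) (P : (Fin m → ℕ) → ℕ → ℝ) : Prop :=
  ∀ x y : ℕ → ℝ, inS x → inS y → Orth x y → Orth (psoV m P x) (psoV m P y)

/-- V is surjective on S. -/
def SurjOnS (m : ℕ) (P : (Fin m → ℕ) → ℕ → ℝ) : Prop :=
  ∀ y : ℕ → ℝ, inS y → ∃ x : ℕ → ℝ, inS x ∧ psoV m P x = y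

/-!
Writing `M y = (y₀ + y₁, y₂, y₃, …)`, the hypermatrix `Q` is `M ∘ P`, and on the simplex
`V_Q = M ∘ V_P` (the series defining `V_P` converge absolutely there). Since `M` maps `S` onto `S`,
a preimage of `y` being `(y₀, 0, y₁, y₂, …)`, surjectivity of `V_P` passes to `V_Q`, while `M`
identifies `e₀` and `e₁`, the images under `V_P` of the orthogonal vertices `e₀` and `e₁`.
-/

open Finset

def mergeFirstTwo {α : Type*} [Add α] (y : ℕ → α) (k : ℕ) : α :=
  if k = 0 then y 0 + y 1 else y (k + 1)

def insertZeroAtOne {α : Type*} [Zero α] (y : ℕ → α) : ℕ → α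
  | 0 => y 0
  | 1 => 0
  | n + 2 => y (n + 1)

theorem mergeFirstTwo_insertZeroAtOne {α : Type*} [AddZeroClass α] (y : ℕ → α) :
    mergeFirstTwo (insertZeroAtOne y) = y := by
  funext k
  cases k <;> simp [mergeFirstTwo, insertZeroAtOne]

section Sequences

variable {α : Type*} [AddCommGroup α] [TopologicalSpace α] [IsTopologicalAddGroup α]

theorem HasSum.mergeFirstTwo {y : ℕ → α} {a : α} (h : HasSum y a) :
    HasSum (_root_.mergeFirstTwo y) a := by
  have htail : HasSum (fun n => _root_.mergeFirstTwo y (n + 1)) (a - (y 0 + y 1)) := by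
    simpa [_root_.mergeFirstTwo, add_assoc, sum_range_succ] using (hasSum_nat_add_iff' 2).mpr h
  refine (hasSum_nat_add_iff' 1).mp ?_
  simpa [_root_.mergeFirstTwo] using htail

theorem HasSum.insertZeroAtOne {y : ℕ → α} {a : α} (h : HasSum y a) :
    HasSum (_root_.insertZeroAtOne y) a := by
  have htail : HasSum (fun n => _root_.insertZeroAtOne y (n + 2)) (a - y 0) := by
    simpa [_root_.insertZeroAtOne] using (hasSum_nat_add_iff' 1).mpr h
  refine (hasSum_nat_add_iff' 2).mp ?_
  simpa [_root_.insertZeroAtOne, sum_range_succ] using htail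

end Sequences

theorem inS.mergeFirstTwo {y : ℕ → ℝ} (hy : inS y) : inS (mergeFirstTwo y) := by
  refine ⟨fun k => ?_, hy.2.mergeFirstTwo⟩
  unfold _root_.mergeFirstTwo
  split_ifs
  exacts [add_nonneg (hy.1 0) (hy.1 1), hy.1 _]

theorem inS.insertZeroAtOne {y : ℕ → ℝ} (hy : inS y) : inS (insertZeroAtOne y) := by
  refine ⟨fun k => ?_, hy.2.insertZeroAtOne⟩
  rcases k with _ | _ | n
  exacts [hy.1 0, le_rfl, hy.1 _]

theorem inS_stdBasis (i : ℕ) : inS (stdBasis i) :=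
  ⟨fun n => by unfold stdBasis; split_ifs <;> norm_num, hasSum_ite_eq i 1⟩

theorem orth_stdBasis {i j : ℕ} (h : i ≠ j) : Orth (stdBasis i) (stdBasis j) := by
  intro k
  unfold stdBasis
  split_ifs <;> simp_all

theorem mergeFirstTwo_stdBasis_zero : mergeFirstTwo (stdBasis 0) = stdBasis 0 := by
  funext k
  simp [mergeFirstTwo, stdBasis]

theorem mergeFirstTwo_stdBasis_succ (r : ℕ) : mergeFirstTwo (stdBasis (r + 1)) = stdBasis r := by
  funext k
  rcases k with _ | k <;> simp [mergeFirstTwo, stdBasis, eq_comm]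

theorem IsStochastic.map_mergeFirstTwo {m : ℕ} {P : (Fin m → ℕ) → ℕ → ℝ} (hP : IsStochastic m P) :
    IsStochastic m fun i => mergeFirstTwo (P i) :=
  ⟨fun i => (inS.mergeFirstTwo ⟨hP.1 i, hP.2 i⟩).1, fun i => (hP.2 i).mergeFirstTwo⟩

theorem IsStochastic.le_one {m : ℕ} {P : (Fin m → ℕ) → ℕ → ℝ} (hP : IsStochastic m P)
    (i : Fin m → ℕ) (k : ℕ) : P i k ≤ 1 :=
  le_hasSum (hP.2 i) k fun j _ => hP.1 i j

theorem summable_prod_pi (m : ℕ) {x : ℕ → ℝ} (hx : ∀ n, 0 ≤ x n) (hs : Summable x) :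
    Summable fun i : Fin m → ℕ => ∏ j, x (i j) := by
  induction m with
  | zero => exact .of_finite
  | succ m ih =>
    have hpair : Summable fun p : ℕ × (Fin m → ℕ) => x p.1 * ∏ j, x (p.2 j) :=
      hs.mul_of_nonneg (g := fun i : Fin m → ℕ => ∏ j, x (i j)) ih hx
        fun i => prod_nonneg fun j _ => hx _
    rw [← (Fin.consEquiv fun _ : Fin (m + 1) => ℕ).summable_iff]
    convert hpair using 1
    funext p
    simp [Fin.consEquiv, Fin.prod_univ_succ]

theorem IsStochastic.summable_psoV_terms {m : ℕ} {P : (Fin m → ℕ) → ℕ → ℝ}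
    (hP : IsStochastic m P) {x : ℕ → ℝ} (hx : inS x) (k : ℕ) :
    Summable fun i : Fin m → ℕ => P i k * ∏ j, x (i j) := by
  have hprod_nonneg (i : Fin m → ℕ) : 0 ≤ ∏ j, x (i j) := prod_nonneg fun j _ => hx.1 _
  refine (summable_prod_pi m hx.1 hx.2.summable).of_nonneg_of_le
    (fun i => mul_nonneg (hP.1 i k) (hprod_nonneg i)) fun i => ?_
  simpa using mul_le_mul_of_nonneg_right (hP.le_one i k) (hprod_nonneg i)

theorem psoV_stdBasis (m : ℕ) (P : (Fin m → ℕ) → ℕ → ℝ) (r : ℕ) :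
    psoV m P (stdBasis r) = P fun _ => r := by
  funext k
  have hterm : (fun i : Fin m → ℕ => P i k * ∏ j, stdBasis r (i j)) =
      fun i => if i = (fun _ => r) then P (fun _ => r) k else 0 := by
    funext i
    split_ifs with h
    · subst h; simp [stdBasis]
    · obtain ⟨j, hj⟩ := Function.ne_iff.mp h
      rw [prod_eq_zero (mem_univ j) (by simp [stdBasis, hj]), mul_zero]
  rw [psoV, hterm, tsum_ite_eq]

theorem IsStochastic.psoV_mergeFirstTwo {m : ℕ} {P : (Fin m → ℕ) → ℕ → ℝ}
    (hP : IsStochastic m P) {x : ℕ → ℝ} (hx : inS x) :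
    psoV m (fun i => mergeFirstTwo (P i)) x = mergeFirstTwo (psoV m P x) := by
  funext k
  rcases k with _ | k
  · simp only [psoV, mergeFirstTwo, if_true, add_mul]
    exact (hP.summable_psoV_terms hx 0).tsum_add (hP.summable_psoV_terms hx 1)
  · simp [psoV, mergeFirstTwo]

theorem IsStochastic.surjOnS_mergeFirstTwo {m : ℕ} {P : (Fin m → ℕ) → ℕ → ℝ}
    (hP : IsStochastic m P) (hsur : SurjOnS m P) :
    SurjOnS m fun i => mergeFirstTwo (P i) := by
  intro y hy
  obtain ⟨x, hx, hxy⟩ := hsur _ hy.insertZeroAtOne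
  exact ⟨x, hx, by rw [hP.psoV_mergeFirstTwo hx, hxy, mergeFirstTwo_insertZeroAtOne]⟩

theorem not_isOP_of_psoV_stdBasis_eq {m : ℕ} {Q : (Fin m → ℕ) → ℕ → ℝ} {i j r : ℕ} (hij : i ≠ j)
    (hi : psoV m Q (stdBasis i) = stdBasis r) (hj : psoV m Q (stdBasis j) = stdBasis r) :
    ¬ IsOP m Q := fun hop => by
  have h := hop _ _ (inS_stdBasis i) (inS_stdBasis j) (orth_stdBasis hij) r
  simp [hi, hj, stdBasis] at h

theorem stmt12_general (m : ℕ) (P : (Fin m → ℕ) → ℕ → ℝ)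
    (hP : IsStochastic m P) (hsur : SurjOnS m P)
    (hfix : ∀ i : ℕ, psoV m P (stdBasis i) = stdBasis i)
    (Q : (Fin m → ℕ) → ℕ → ℝ)
    (hQ : ∀ (i : Fin m → ℕ) (k : ℕ),
      Q i k = if k = 0 then P i 0 + P i 1 else P i (k + 1)) :
    IsStochastic m Q ∧ SurjOnS m Q ∧
    psoV m Q (stdBasis 0) = stdBasis 0 ∧ psoV m Q (stdBasis 1) = stdBasis 0 ∧
    ¬ IsOP m Q := by
  obtain rfl : Q = fun i => mergeFirstTwo (P i) := funext fun i => funext (hQ i)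
  have hvertex (r : ℕ) :
      psoV m (fun i => mergeFirstTwo (P i)) (stdBasis r) = mergeFirstTwo (stdBasis r) := by
    rw [psoV_stdBasis, ← hfix r, psoV_stdBasis]
  have he₀ := (hvertex 0).trans mergeFirstTwo_stdBasis_zero
  have he₁ := (hvertex 1).trans (mergeFirstTwo_stdBasis_succ 0)
  exact ⟨hP.map_mergeFirstTwo, hP.surjOnS_mergeFirstTwo hsur, he₀, he₁,
    not_isOP_of_psoV_stdBasis_eq zero_ne_one he₀ he₁⟩

theorem stmt12 (m : ℕ) (hm : 1 ≤ m) (P : (Fin m → ℕ) → ℕ → ℝ)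
    (hP : IsStochastic m P) (hsur : SurjOnS m P)
    (hfix : ∀ i : ℕ, psoV m P (stdBasis i) = stdBasis i)
    (Q : (Fin m → ℕ) → ℕ → ℝ)
    (hQ : ∀ (i : Fin m → ℕ) (k : ℕ),
      Q i k = if k = 0 then P i 0 + P i 1 else P i (k + 1)) :
    IsStochastic m Q ∧ SurjOnS m Q ∧
    psoV m Q (stdBasis 0) = stdBasis 0 ∧ psoV m Q (stdBasis 1) = stdBasis 0 ∧
    ¬ IsOP m Q :=
  stmt12_general m P hP hsur hfix Q hQ
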